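/- arXiv:2506.03361 — 4 statements merged into one kernel-verified Lean document; each statement's English description precedes it below -/
import Mathlib

section
/- For every integer i ≥ 1 and every finite alphabet A with |A| ≥ 2, the maximum cardinality of a code C ⊆ (A³)ⁱ that is unambiguous for the Scenario-A.2 i-shot Diamond channel, taken over all choices of per-round node functions (f₁ʲ : A → A, f₂ʲ : A² → A for j = 1,…,i), equals (|A| − 1)ⁱ. Equivalently, the i-shot capacity of the Diamond Network when the adversary may change the attacked edge each round is log_{|A|}(|A| − 1), the same as its one-shot capacity. -/
/-!
A codeword's fan-out set is the product of its one-round fan-out sets, so everything happens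
round by round. For the bound, colour each block `u ∈ A³` by an element of `A ∖ {a₀}` so that
blocks of equal colour have intersecting fan-outs: the adversary may always rewrite the edge into
`V₁`, and `f₂ (u 1) (u 2)` is reachable from `v` by rewriting one edge into `V₂` as soon as it
lies in the row of `v 1` or the column of `v 2` of `f₂`. Codewords with equal colour vectors are
then confusable, which bounds an unambiguous code by `(|A| - 1)^i`. The matching code sends one
symbol `a ≠ a₀` on all three edges in each round; `V₁` forwards, and `V₂` forwards when its two
inputs agree and outputs `a₀` otherwise.
-/

/-- A code `C` is unambiguous for the channel `Ω` if distinct codewords have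
disjoint fan-out sets. -/
def Unambiguous {X Y : Type*} (Ω : X → Set Y) (C : Finset X) : Prop :=
  ∀ x ∈ C, ∀ y ∈ C, x ≠ y → Ω x ∩ Ω y = ∅

/-- The `i`-shot Diamond Network channel in Scenario A.2: in each round the
adversary may corrupt at most one of the three source edges, possibly a
different edge in different rounds.  Per-round node functions are
`f₁ʲ : A → A` (node `V₁`) and `f₂ʲ : A² → A` (node `V₂`). -/
def diamondA2Channel {A : Type*} [DecidableEq A] (i : ℕ)
    (f₁ : Fin i → A → A) (f₂ : Fin i → A → A → A)
    (x : Fin i → Fin 3 → A) : Set (Fin i → A × A) :=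
  { z | ∃ y : Fin i → Fin 3 → A,
      (∀ j : Fin i, hammingDist (y j) (x j) ≤ 1) ∧
      (∀ j : Fin i, z j = (f₁ j (y j 0), f₂ j (y j 1) (y j 2))) }

theorem Unambiguous.card_le {X Y K : Type*} [Fintype K] {Ω : X → Set Y} {C : Finset X}
    (hC : Unambiguous Ω C) (φ : X → K) (hφ : ∀ x y, φ x = φ y → (Ω x ∩ Ω y).Nonempty) :
    C.card ≤ Fintype.card K := by
  refine Finset.card_le_card_of_injOn φ (fun _ _ => Finset.mem_coe.2 (Finset.mem_univ _)) ?_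
  intro x hx y hy hxy
  by_contra hne
  exact (hφ x y hxy).ne_empty (hC x hx y hy hne)

theorem Unambiguous.piFinset {ι : Type*} [Fintype ι] [DecidableEq ι] {X Y : ι → Type*}
    {Ω : ∀ j, X j → Set (Y j)} {S : ∀ j, Finset (X j)} (hS : ∀ j, Unambiguous (Ω j) (S j)) :
    Unambiguous (fun x => Set.univ.pi fun j => Ω j (x j)) (Fintype.piFinset S) := by
  intro x hx y hy hxy
  obtain ⟨j, hj⟩ := Function.ne_iff.1 hxy
  rw [Fintype.mem_piFinset] at hx hy
  rw [← Set.pi_inter_distrib, Set.eq_empty_iff_forall_notMem]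
  intro z hz
  exact (hS j _ (hx j) _ (hy j) hj).subset (hz j (Set.mem_univ j))

theorem Set.univ_pi_inter_univ_pi_nonempty {ι : Type*} {α : ι → Type*} {s t : ∀ j, Set (α j)}
    (h : ∀ j, (s j ∩ t j).Nonempty) : (Set.univ.pi s ∩ Set.univ.pi t).Nonempty := by
  rw [← Set.pi_inter_distrib]
  exact Set.univ_pi_nonempty_iff.2 h

section DiamondRound

variable {A : Type*} [DecidableEq A]

theorem hammingDist_update_self_le_one {ι : Type*} [Fintype ι] [DecidableEq ι]
    (u : ι → A) (k : ι) (a : A) : hammingDist (Function.update u k a) u ≤ 1 := by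
  refine Finset.card_le_one.2 fun i hi j hj => ?_
  have hk : ∀ l ∈ Finset.univ.filter fun l => Function.update u k a l ≠ u l, l = k := by
    intro l hl
    by_contra hlk
    exact (Finset.mem_filter.1 hl).2 (Function.update_of_ne hlk a u)
  rw [hk i hi, hk j hj]

theorem eq_or_eq_of_hammingDist_le_one {ι : Type*} [Fintype ι] {y x : ι → A}
    (h : hammingDist y x ≤ 1) {i j : ι} (hij : i ≠ j) : y i = x i ∨ y j = x j := by
  by_contra! hne
  exact hij (Finset.card_le_one.1 h i (by simpa using hne.1) j (by simpa using hne.2))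

def roundFan (f₁ : A → A) (f₂ : A → A → A) (u : Fin 3 → A) : Set (A × A) :=
  {w | ∃ y : Fin 3 → A, hammingDist y u ≤ 1 ∧ w = (f₁ (y 0), f₂ (y 1) (y 2))}

theorem diamondA2Channel_eq_pi {i : ℕ} (f₁ : Fin i → A → A) (f₂ : Fin i → A → A → A) :
    diamondA2Channel i f₁ f₂ = fun x => Set.univ.pi fun j => roundFan (f₁ j) (f₂ j) (x j) := by
  ext x z
  simp only [diamondA2Channel, roundFan, Set.mem_ofPred_eq, Set.mem_pi, Set.mem_univ,
    true_implies]
  constructor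
  · rintro ⟨y, hy, hz⟩ j
    exact ⟨y j, hy j, hz j⟩
  · intro h
    choose y hy hz using h
    exact ⟨y, hy, hz⟩

section Converse

variable (f₁ : A → A) (f₂ : A → A → A)

theorem roundFan_inter_nonempty_of_mem {u v : Fin 3 → A}
    (h : f₂ (u 1) (u 2) ∈ Set.range (f₂ (v 1)) ∪ Set.range (f₂ · (v 2))) :
    (roundFan f₁ f₂ u ∩ roundFan f₁ f₂ v).Nonempty := by
  refine ⟨(f₁ (v 0), f₂ (u 1) (u 2)),
    ⟨Function.update u 0 (v 0), hammingDist_update_self_le_one u 0 _, by simp⟩, ?_⟩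
  rcases h with ⟨c, hc⟩ | ⟨r, hr⟩
  · exact ⟨Function.update v 2 c, hammingDist_update_self_le_one v 2 c, by simp [hc]⟩
  · exact ⟨Function.update v 1 r, hammingDist_update_self_le_one v 1 r, by simp [hr]⟩

theorem roundFan_inter_nonempty_of_eq {u v : Fin 3 → A}
    (h : f₂ (u 1) (u 2) = f₂ (v 1) (v 2)) :
    (roundFan f₁ f₂ u ∩ roundFan f₁ f₂ v).Nonempty :=
  roundFan_inter_nonempty_of_mem f₁ f₂ (Or.inl ⟨v 2, h.symm⟩)

theorem exists_ne_forall_roundFan_inter_nonempty {a₀ a₁ : A} (h₁₀ : a₁ ≠ a₀) {u : Fin 3 → A}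
    (hu : f₂ (u 1) (u 2) = a₀) :
    ∃ t ≠ a₀, ∀ v : Fin 3 → A, f₂ (v 1) (v 2) = t →
      (roundFan f₁ f₂ u ∩ roundFan f₁ f₂ v).Nonempty := by
  by_cases hrow : ∃ c, f₂ (u 1) c ≠ a₀
  · obtain ⟨c, hc⟩ := hrow
    refine ⟨_, hc, fun v hv => ?_⟩
    rw [Set.inter_comm]
    exact roundFan_inter_nonempty_of_mem f₁ f₂ (Or.inl ⟨c, hv.symm⟩)
  · push Not at hrow
    exact ⟨a₁, h₁₀, fun v _ =>
      roundFan_inter_nonempty_of_mem f₁ f₂ (Or.inr ⟨u 1, (hrow _).trans hu.symm⟩)⟩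

theorem exists_roundFan_coloring {a₀ a₁ : A} (h₁₀ : a₁ ≠ a₀) :
    ∃ ψ : (Fin 3 → A) → {a : A // a ≠ a₀}, ∀ u v, ψ u = ψ v →
      (roundFan f₁ f₂ u ∩ roundFan f₁ f₂ v).Nonempty := by
  -- A block is coloured by its `V₂`-output unless that output is `a₀`.
  have hcolor : ∀ u : Fin 3 → A, ∃ t : {a : A // a ≠ a₀},
      (f₂ (u 1) (u 2) = a₀ → ∀ v : Fin 3 → A, f₂ (v 1) (v 2) = t →
        (roundFan f₁ f₂ u ∩ roundFan f₁ f₂ v).Nonempty) ∧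
      (f₂ (u 1) (u 2) ≠ a₀ → (t : A) = f₂ (u 1) (u 2)) := by
    intro u
    by_cases hu : f₂ (u 1) (u 2) = a₀
    · obtain ⟨t, ht, hconf⟩ := exists_ne_forall_roundFan_inter_nonempty f₁ f₂ h₁₀ hu
      exact ⟨⟨t, ht⟩, fun _ => hconf, fun h => absurd hu h⟩
    · exact ⟨⟨_, hu⟩, fun h => absurd h hu, fun _ => rfl⟩
  choose ψ hψ₀ hψ using hcolor
  refine ⟨ψ, fun u v huv => ?_⟩
  by_cases hu : f₂ (u 1) (u 2) = a₀ <;> by_cases hv : f₂ (v 1) (v 2) = a₀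
  · exact roundFan_inter_nonempty_of_eq f₁ f₂ (hu.trans hv.symm)
  · exact hψ₀ u hu v (by rw [huv, hψ v hv])
  · rw [Set.inter_comm]
    exact hψ₀ v hv u (by rw [← huv, hψ u hu])
  · exact roundFan_inter_nonempty_of_eq f₁ f₂ (by rw [← hψ u hu, ← hψ v hv, huv])

end Converse

section Achievability

def majority (a₀ : A) (b c : A) : A := if b = c then b else a₀

theorem mem_roundFan_const {a₀ a : A} {z : A × A}
    (hz : z ∈ roundFan id (majority a₀) (Function.const (Fin 3) a)) :
    z.2 = a ∨ (z.1 = a ∧ z.2 = a₀) := by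
  obtain ⟨y, hy, rfl⟩ := hz
  have hpair {k l : Fin 3} (hkl : k ≠ l) : y k = a ∨ y l = a :=
    eq_or_eq_of_hammingDist_le_one hy hkl
  by_cases h0 : y 0 = a
  · unfold majority
    split_ifs with h12
    · exact Or.inl ((hpair (show (1 : Fin 3) ≠ 2 by decide)).elim id h12.trans)
    · exact Or.inr ⟨h0, rfl⟩
  · have h1 := (hpair (show (0 : Fin 3) ≠ 1 by decide)).resolve_left h0
    have h2 := (hpair (show (0 : Fin 3) ≠ 2 by decide)).resolve_left h0
    simp [majority, h1, h2]

theorem unambiguous_roundFan_const [Fintype A] (a₀ : A) :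
    Unambiguous (roundFan id (majority a₀))
      ((Finset.univ.erase a₀).image (Function.const (Fin 3))) := by
  simp only [Unambiguous, Finset.mem_image, Finset.mem_erase, Finset.mem_univ, and_true]
  rintro _ ⟨a, ha, rfl⟩ _ ⟨b, hb, rfl⟩ hab
  have hne : a ≠ b := fun h => hab (h ▸ rfl)
  rw [Set.eq_empty_iff_forall_notMem]
  rintro z ⟨hza, hzb⟩
  rcases mem_roundFan_const hza with hza | ⟨hza, hza₀⟩ <;>
    rcases mem_roundFan_const hzb with hzb | ⟨hzb, hzb₀⟩
  · exact hne (hza.symm.trans hzb)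
  · exact ha (hza.symm.trans hzb₀)
  · exact hb (hzb.symm.trans hza₀)
  · exact hne (hza.symm.trans hzb)

end Achievability

end DiamondRound

theorem diamond_A2_multishot_capacity_general
    (A : Type*) [Fintype A] [DecidableEq A] (hA : 2 ≤ Fintype.card A)
    (i : ℕ) :
    IsGreatest { n : ℕ |
        ∃ (f₁ : Fin i → A → A) (f₂ : Fin i → A → A → A)
          (C : Finset (Fin i → Fin 3 → A)),
          Unambiguous (diamondA2Channel i f₁ f₂) C ∧ C.card = n }
      ((Fintype.card A - 1) ^ i) := by
  obtain ⟨a₁, a₀, h₁₀⟩ := Fintype.exists_pair_of_one_lt_card hA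
  refine ⟨⟨fun _ => id, fun _ => majority a₀,
    Fintype.piFinset fun _ => (Finset.univ.erase a₀).image (Function.const (Fin 3)), ?_, ?_⟩, ?_⟩
  · rw [diamondA2Channel_eq_pi]
    exact Unambiguous.piFinset fun _ => unambiguous_roundFan_const a₀
  · rw [Fintype.card_piFinset_const, Finset.card_image_of_injective _ Function.const_injective,
      Finset.card_erase_of_mem (Finset.mem_univ _), Finset.card_univ]
  · rintro _ ⟨f₁, f₂, C, hC, rfl⟩
    choose ψ hψ using fun j => exists_roundFan_coloring (f₁ j) (f₂ j) h₁₀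
    rw [diamondA2Channel_eq_pi] at hC
    calc C.card ≤ Fintype.card (Fin i → {a : A // a ≠ a₀}) :=
          hC.card_le (fun x j => ψ j (x j)) fun x y hxy =>
            Set.univ_pi_inter_univ_pi_nonempty fun j => hψ j _ _ (congrFun hxy j)
      _ = (Fintype.card A - 1) ^ i := by simp [Fintype.card_subtype_compl]

/-- Scenario A.2 multishot capacity of the Diamond Network: the maximum
cardinality of an unambiguous code, over all choices of per-round node
functions, is `(|A| - 1)^i`. -/
theorem diamond_A2_multishot_capacity
    (A : Type*) [Fintype A] [DecidableEq A] (hA : 2 ≤ Fintype.card A)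
    (i : ℕ) (hi : 1 ≤ i) :
    IsGreatest { n : ℕ |
        ∃ (f₁ : Fin i → A → A) (f₂ : Fin i → A → A → A)
          (C : Finset (Fin i → Fin 3 → A)),
          Unambiguous (diamondA2Channel i f₁ f₂) C ∧ C.card = n }
      ((Fintype.card A - 1) ^ i) :=
  diamond_A2_multishot_capacity_general A hA i
end

section
/- For every integer i ≥ 1 and every finite alphabet A with |A| ≥ 2, the maximum cardinality of a code C ⊆ (A⁴)ⁱ that is unambiguous for the Scenario-A.1 i-shot Mirrored Diamond channel, taken over all choices of per-round node functions (f₁ʲ, f₂ʲ : A² → A for j = 1,…,i), equals |A|ⁱ. Equivalently, the i-shot capacity of the Mirrored Diamond Network when the adversary must attack the same edge in every round is 1, the same as its one-shot capacity. -/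
/-- The `i`-shot Mirrored Diamond Network channel in Scenario A.1: the
adversary picks a single edge `k ∈ {1,2,3,4}` and may corrupt only that edge,
the same one in every round.  Per-round node functions are
`f₁ʲ, f₂ʲ : A² → A`. -/
def mirroredDiamondA1Channel {A : Type*} (i : ℕ)
    (f₁ : Fin i → A → A → A) (f₂ : Fin i → A → A → A)
    (x : Fin i → Fin 4 → A) : Set (Fin i → A × A) :=
  { z | ∃ k : Fin 4, ∃ y : Fin i → Fin 4 → A,
      (∀ j : Fin i, ∀ m : Fin 4, m ≠ k → y j m = x j m) ∧
      (∀ j : Fin i, z j = (f₁ j (y j 0) (y j 1), f₂ j (y j 2) (y j 3))) }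

namespace MirroredDiamond

variable {A : Type*} {i : ℕ}

section UpperBound

variable {f₁ f₂ : Fin i → A → A → A}

theorem mem_channel_of_corrupt_edge_three (x x' : Fin i → Fin 4 → A) :
    (fun j => (f₁ j (x j 0) (x j 1), f₂ j (x' j 2) (x j 3))) ∈
      mirroredDiamondA1Channel i f₁ f₂ x :=
  ⟨2, fun j m => if m = 2 then x' j 2 else x j m, fun j m hm => by simp [hm],
    fun j => by simp⟩

theorem mem_channel_of_corrupt_edge_four (x x' : Fin i → Fin 4 → A)
    (h : ∀ j, f₁ j (x j 0) (x j 1) = f₁ j (x' j 0) (x' j 1)) :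
    (fun j => (f₁ j (x j 0) (x j 1), f₂ j (x' j 2) (x j 3))) ∈
      mirroredDiamondA1Channel i f₁ f₂ x' :=
  ⟨3, fun j m => if m = 3 then x j 3 else x' j m, fun j m hm => by simp [hm],
    fun j => by simp [h]⟩

theorem injOn_firstNode_of_unambiguous {C : Finset (Fin i → Fin 4 → A)}
    (hC : Unambiguous (mirroredDiamondA1Channel i f₁ f₂) C) :
    Set.InjOn (fun x j => f₁ j (x j 0) (x j 1)) (C : Set (Fin i → Fin 4 → A)) := by
  intro x hx x' hx' hf
  by_contra hne
  have hboth := Set.mem_inter (mem_channel_of_corrupt_edge_three (f₂ := f₂) x x')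
    (mem_channel_of_corrupt_edge_four x x' (congrFun hf))
  rw [hC x hx x' hx' hne] at hboth
  exact hboth

theorem card_le_of_unambiguous [Fintype A] {C : Finset (Fin i → Fin 4 → A)}
    (hC : Unambiguous (mirroredDiamondA1Channel i f₁ f₂) C) :
    C.card ≤ Fintype.card A ^ i := by
  simpa using Finset.card_le_card_of_injOn _ (fun _ _ => Finset.mem_coe.2 (Finset.mem_univ _))
    (injOn_firstNode_of_unambiguous hC)

end UpperBound

section Achievability

variable (e : A)

def consistentOutputs (a : A) : Set (A × A) :=
  {p | p.1 = a ∧ (p.2 = a ∨ p.2 = e)} ∪ {p | p.2 = a ∧ (p.1 = a ∨ p.1 = e)}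

theorem eq_of_mem_consistentOutputs {a b : A} {p : A × A} (ha : p ∈ consistentOutputs e a)
    (hb : p ∈ consistentOutputs e b) : a = b := by
  obtain ⟨p₁, p₂⟩ := p
  simp only [consistentOutputs, Set.mem_union, Set.mem_ofPred_eq] at ha hb
  grind

def repetition (m : Fin i → A) : Fin i → Fin 4 → A := fun j _ => m j

theorem repetition_injective : Function.Injective (repetition (A := A) (i := i)) :=
  fun _ _ h => funext fun j => congrFun (congrFun h j) 0

variable [DecidableEq A]

def forwardOrFlag (u v : A) : A := if u = v then u else e

theorem forwardOrFlag_self (u : A) : forwardOrFlag e u u = u := if_pos rfl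

theorem forwardOrFlag_eq_or_eq_flag {a u v : A} (h : u = a ∨ v = a) :
    forwardOrFlag e u v = a ∨ forwardOrFlag e u v = e := by
  unfold forwardOrFlag
  split_ifs with huv
  · rcases h with rfl | rfl
    · exact .inl rfl
    · exact .inl huv
  · exact .inr rfl

theorem forwardOrFlag_mem_consistentOutputs {a : A} {y : Fin 4 → A} (k : Fin 4)
    (hy : ∀ m, m ≠ k → y m = a) :
    (forwardOrFlag e (y 0) (y 1), forwardOrFlag e (y 2) (y 3)) ∈ consistentOutputs e a := by
  fin_cases k
  · refine .inr ⟨?_, forwardOrFlag_eq_or_eq_flag e (.inr (hy 1 (by decide)))⟩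
    simp [hy 2 (by decide), hy 3 (by decide), forwardOrFlag_self]
  · refine .inr ⟨?_, forwardOrFlag_eq_or_eq_flag e (.inl (hy 0 (by decide)))⟩
    simp [hy 2 (by decide), hy 3 (by decide), forwardOrFlag_self]
  · refine .inl ⟨?_, forwardOrFlag_eq_or_eq_flag e (.inr (hy 3 (by decide)))⟩
    simp [hy 0 (by decide), hy 1 (by decide), forwardOrFlag_self]
  · refine .inl ⟨?_, forwardOrFlag_eq_or_eq_flag e (.inl (hy 2 (by decide)))⟩
    simp [hy 0 (by decide), hy 1 (by decide), forwardOrFlag_self]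

theorem mem_consistentOutputs_of_mem_channel {m : Fin i → A} {z : Fin i → A × A}
    (hz : z ∈ mirroredDiamondA1Channel i (fun _ => forwardOrFlag e) (fun _ => forwardOrFlag e)
      (repetition m)) (j : Fin i) :
    z j ∈ consistentOutputs e (m j) := by
  obtain ⟨k, y, hy, hzy⟩ := hz
  rw [hzy j]
  exact forwardOrFlag_mem_consistentOutputs e k (hy j)

theorem unambiguous_image_repetition [Fintype A] :
    Unambiguous (mirroredDiamondA1Channel i (fun _ => forwardOrFlag e) (fun _ => forwardOrFlag e))
      (Finset.univ.image repetition) := by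
  simp only [Unambiguous, Finset.mem_image, Finset.mem_univ, true_and]
  rintro _ ⟨m, rfl⟩ _ ⟨m', rfl⟩ hne
  refine Set.eq_empty_of_forall_notMem fun z ⟨hz, hz'⟩ => hne ?_
  congr 1
  exact funext fun j => eq_of_mem_consistentOutputs e
    (mem_consistentOutputs_of_mem_channel e hz j) (mem_consistentOutputs_of_mem_channel e hz' j)

end Achievability

end MirroredDiamond

open MirroredDiamond in
theorem mirrored_diamond_A1_multishot_capacity_general
    (A : Type*) [Fintype A] [DecidableEq A] (hA : 2 ≤ Fintype.card A)
    (i : ℕ) :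
    IsGreatest { n : ℕ |
        ∃ (f₁ : Fin i → A → A → A) (f₂ : Fin i → A → A → A)
          (C : Finset (Fin i → Fin 4 → A)),
          Unambiguous (mirroredDiamondA1Channel i f₁ f₂) C ∧ C.card = n }
      (Fintype.card A ^ i) := by
  obtain ⟨e⟩ : Nonempty A := Fintype.card_pos_iff.mp (by omega)
  refine ⟨⟨_, _, _, unambiguous_image_repetition e, ?_⟩, ?_⟩
  · simp [Finset.card_image_of_injective _ repetition_injective]
  · rintro n ⟨f₁, f₂, C, hC, rfl⟩
    exact card_le_of_unambiguous hC

/-- Scenario A.1 multishot capacity of the Mirrored Diamond Network: the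
maximum cardinality of an unambiguous code, over all choices of per-round node
functions, is `|A|^i`. -/
theorem mirrored_diamond_A1_multishot_capacity
    (A : Type*) [Fintype A] [DecidableEq A] (hA : 2 ≤ Fintype.card A)
    (i : ℕ) (hi : 1 ≤ i) :
    IsGreatest { n : ℕ |
        ∃ (f₁ : Fin i → A → A → A) (f₂ : Fin i → A → A → A)
          (C : Finset (Fin i → Fin 4 → A)),
          Unambiguous (mirroredDiamondA1Channel i f₁ f₂) C ∧ C.card = n }
      (Fintype.card A ^ i) :=
  mirrored_diamond_A1_multishot_capacity_general A hA i
end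

section
/- Let A be a finite alphabet with |A| ≥ 2 and let t, i ≥ 1 be integers. The maximum cardinality of a code C ⊆ (A^{2t+1})ⁱ with the property that for all distinct x = (x¹,…,xⁱ) and y = (y¹,…,yⁱ) in C there exists a block index j ∈ {1,…,i} with d_H(xʲ, yʲ) ≥ 2t+1 (i.e. xʲ and yʲ differ in every one of their 2t+1 coordinates) is exactly |A|ⁱ. In particular, no such code of cardinality |A|ⁱ + 1 exists, and the bound is attained by the blockwise repetition code {((a₁,…,a₁), …, (a_i,…,a_i)) : (a₁,…,a_i) ∈ Aⁱ}. -/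
/-!
Two codewords that are at full Hamming distance in some block differ at every position of
that block, so reading off one fixed position of every block is injective on such a
code and maps it into `A^i`. Conversely, distinct repetition codewords differ in some block
symbol, and that block is then at full distance.
-/

open Finset

/-- The blockwise repetition code: each of the `i` blocks of length `2t+1` is a
constant (repeated) symbol. -/
def repCode (A : Type*) [Fintype A] [DecidableEq A] (t i : ℕ) :
    Finset (Fin i → Fin (2 * t + 1) → A) :=
  Finset.image (fun a : Fin i → A => fun j _ => a j) Finset.univ

section Hamming

variable {ι : Type*} [Fintype ι]

theorem ne_of_card_le_hammingDist {β : ι → Type*} [∀ k, DecidableEq (β k)] {x y : ∀ k, β k}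
    (h : Fintype.card ι ≤ hammingDist x y) (k : ι) : x k ≠ y k := by
  have hfull : #({k | x k ≠ y k} : Finset ι) = #(univ : Finset ι) :=
    le_antisymm (card_filter_le _ _) h
  exact card_filter_eq_iff.mp hfull k (mem_univ k)

theorem hammingDist_const_of_ne {α : Type*} [DecidableEq α] {a b : α} (h : a ≠ b) :
    hammingDist (fun _ : ι => a) (fun _ => b) = Fintype.card ι := by
  simp [hammingDist, h]

end Hamming

theorem card_le_of_exists_block_card_le_hammingDist {κ ι A : Type*} [Fintype κ] [Fintype ι]
    [Nonempty ι] [Fintype A] [DecidableEq A] {C : Finset (κ → ι → A)}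
    (hC : ∀ x ∈ C, ∀ y ∈ C, x ≠ y → ∃ j, Fintype.card ι ≤ hammingDist (x j) (y j)) :
    #C ≤ Fintype.card A ^ Fintype.card κ := by
  classical
  let k₀ : ι := Classical.arbitrary ι
  have hinj : Set.InjOn (fun (x : κ → ι → A) j => x j k₀) C := by
    intro x hx y hy hxy
    by_contra hne
    obtain ⟨j, hj⟩ := hC x hx y hy hne
    exact ne_of_card_le_hammingDist hj k₀ (congrFun hxy j)
  calc #C ≤ #(univ : Finset (κ → A)) := card_le_card_of_injOn _ (fun _ _ => mem_univ _) hinj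
    _ = Fintype.card A ^ Fintype.card κ := by rw [card_univ, Fintype.card_fun]

section RepCode

variable {A : Type*} [Fintype A] [DecidableEq A] {t i : ℕ}

theorem exists_block_hammingDist_eq_of_mem_repCode {x y : Fin i → Fin (2 * t + 1) → A}
    (hx : x ∈ repCode A t i) (hy : y ∈ repCode A t i) (hne : x ≠ y) :
    ∃ j, hammingDist (x j) (y j) = 2 * t + 1 := by
  obtain ⟨a, -, rfl⟩ := mem_image.mp hx
  obtain ⟨b, -, rfl⟩ := mem_image.mp hy
  obtain ⟨j, hj⟩ := Function.ne_iff.mp fun hab : a = b => hne (hab ▸ rfl)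
  exact ⟨j, (hammingDist_const_of_ne hj).trans (Fintype.card_fin _)⟩

theorem card_repCode : #(repCode A t i) = Fintype.card A ^ i := by
  have hinj : Function.Injective fun (a : Fin i → A) j (_ : Fin (2 * t + 1)) => a j :=
    fun a b h => funext fun j => congrFun (congrFun h j) 0
  rw [repCode, card_image_of_injective _ hinj, card_univ, Fintype.card_fun, Fintype.card_fin]

end RepCode

theorem blockwise_full_distance_code_max_general
    (A : Type*) [Fintype A] [DecidableEq A]
    (t i : ℕ) :
    (∀ C : Finset (Fin i → Fin (2 * t + 1) → A),
        (∀ x ∈ C, ∀ y ∈ C, x ≠ y →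
            ∃ j : Fin i, 2 * t + 1 ≤ hammingDist (x j) (y j)) →
        C.card ≤ Fintype.card A ^ i) ∧
    (∀ x ∈ repCode A t i, ∀ y ∈ repCode A t i, x ≠ y →
        ∃ j : Fin i, 2 * t + 1 ≤ hammingDist (x j) (y j)) ∧
    (repCode A t i).card = Fintype.card A ^ i := by
  refine ⟨fun C hC => ?_, fun x hx y hy hne => ?_, card_repCode⟩
  · simpa using card_le_of_exists_block_card_le_hammingDist (C := C) (by simpa using hC)
  · obtain ⟨j, hj⟩ := exists_block_hammingDist_eq_of_mem_repCode hx hy hne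
    exact ⟨j, hj.ge⟩

/-- Let `A` be a finite alphabet with `|A| ≥ 2` and `t, i ≥ 1`.  Any code
`C ⊆ (A^{2t+1})^i` such that any two distinct codewords have some block at
Hamming distance `≥ 2t+1` has cardinality at most `|A|^i`; moreover the
blockwise repetition code has this property and attains cardinality `|A|^i`. -/
theorem blockwise_full_distance_code_max
    (A : Type*) [Fintype A] [DecidableEq A] (hA : 2 ≤ Fintype.card A)
    (t i : ℕ) (ht : 1 ≤ t) (hi : 1 ≤ i) :
    (∀ C : Finset (Fin i → Fin (2 * t + 1) → A),
        (∀ x ∈ C, ∀ y ∈ C, x ≠ y →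
            ∃ j : Fin i, 2 * t + 1 ≤ hammingDist (x j) (y j)) →
        C.card ≤ Fintype.card A ^ i) ∧
    (∀ x ∈ repCode A t i, ∀ y ∈ repCode A t i, x ≠ y →
        ∃ j : Fin i, 2 * t + 1 ≤ hammingDist (x j) (y j)) ∧
    (repCode A t i).card = Fintype.card A ^ i :=
  blockwise_full_distance_code_max_general A t i
end

section
/- Let Ω₁ : X₁ → Set Y₁ and Ω₂ : X₂ → Set Y₂ be channels with nonempty fan-out sets and Y₁ ⊆ X₂, and let Ω₁ ▶ Ω₂ : X₁ → Set Y₂ be their concatenation, (Ω₁ ▶ Ω₂)(x) = ⋃_{y ∈ Ω₁(x)} Ω₂(y). Then the maximum cardinality of an unambiguous code for Ω₁ ▶ Ω₂ is at most the minimum of the maximum cardinalities of unambiguous codes for Ω₁ and for Ω₂; equivalently, C₁(Ω₁ ▶ Ω₂) ≤ min{C₁(Ω₁), C₁(Ω₂)}. -/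
/-- The maximum cardinality of an unambiguous code for the channel `Ω`. -/
noncomputable def maxUnambCard {X Y : Type*} (Ω : X → Set Y) : ℕ :=
  sSup { n : ℕ | ∃ C : Finset X, Unambiguous Ω C ∧ C.card = n }

/-- The concatenation `Ω₁ ▶ Ω₂` of two channels. -/
def concatChannel {X₁ X₂ Y₂ : Type*} (Ω₁ : X₁ → Set X₂) (Ω₂ : X₂ → Set Y₂) :
    X₁ → Set Y₂ :=
  fun x => ⋃ y ∈ Ω₁ x, Ω₂ y

/- If two inputs could reach a common intermediate symbol `z`, any output in the nonempty
set `Ω₂ z` would confuse them, so a code for `Ω₁ ▶ Ω₂` is a code for `Ω₁`. Fixing a choice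
`f x ∈ Ω₁ x`, every `Ω₂ (f x)` lies inside `(Ω₁ ▶ Ω₂) x`, so `f` maps the code injectively
onto a code for `Ω₂`. -/

section Unambiguous

variable {X Y Z : Type*}

theorem Unambiguous.card_le_maxUnambCard [Finite X] {Ω : X → Set Y} {C : Finset X}
    (h : Unambiguous Ω C) : C.card ≤ maxUnambCard Ω := by
  have := Fintype.ofFinite X
  refine le_csSup ⟨Fintype.card X, ?_⟩ ⟨C, h, rfl⟩
  rintro n ⟨D, -, rfl⟩
  exact D.card_le_univ

theorem maxUnambCard_le {Ω : X → Set Y} {m : ℕ}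
    (h : ∀ C : Finset X, Unambiguous Ω C → C.card ≤ m) : maxUnambCard Ω ≤ m :=
  csSup_le' (by rintro n ⟨C, hC, rfl⟩; exact h C hC)

theorem Unambiguous.mono {Ω Ω' : X → Set Y} {C : Finset X} (hΩ : ∀ x, Ω' x ⊆ Ω x)
    (h : Unambiguous Ω C) : Unambiguous Ω' C := fun x hx y hy hxy =>
  Set.subset_eq_empty (Set.inter_subset_inter (hΩ x) (hΩ y)) (h x hx y hy hxy)

theorem Unambiguous.injOn_of_comp {Ω : Y → Set Z} {f : X → Y} {C : Finset X}
    (hΩ : ∀ y, (Ω y).Nonempty) (h : Unambiguous (Ω ∘ f) C) : Set.InjOn f C := by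
  intro x hx y hy hfxy
  by_contra hxy
  obtain ⟨w, hw⟩ := hΩ (f x)
  have hw' : w ∈ Ω (f x) ∩ Ω (f y) := ⟨hw, hfxy ▸ hw⟩
  exact Set.eq_empty_iff_forall_notMem.mp (h x hx y hy hxy) w hw'

theorem Unambiguous.image_of_comp [DecidableEq Y] {Ω : Y → Set Z} {f : X → Y} {C : Finset X}
    (h : Unambiguous (Ω ∘ f) C) : Unambiguous Ω (C.image f) := by
  simp only [Unambiguous, Finset.mem_image]
  rintro _ ⟨x, hx, rfl⟩ _ ⟨y, hy, rfl⟩ hfxy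
  exact h x hx y hy (ne_of_apply_ne f hfxy)

theorem Unambiguous.card_le_of_comp [Finite Y] {Ω : Y → Set Z} {f : X → Y} {C : Finset X}
    (hΩ : ∀ y, (Ω y).Nonempty) (h : Unambiguous (Ω ∘ f) C) : C.card ≤ maxUnambCard Ω := by
  classical
  rw [← Finset.card_image_of_injOn (h.injOn_of_comp hΩ)]
  exact (h.image_of_comp).card_le_maxUnambCard

end Unambiguous

section concatChannel

variable {X₁ X₂ Y₂ : Type*} {Ω₁ : X₁ → Set X₂} {Ω₂ : X₂ → Set Y₂}

theorem subset_concatChannel {x : X₁} {y : X₂} (hy : y ∈ Ω₁ x) :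
    Ω₂ y ⊆ concatChannel Ω₁ Ω₂ x :=
  Set.subset_biUnion_of_mem (u := Ω₂) hy

theorem Unambiguous.of_concatChannel_left {C : Finset X₁} (hne₂ : ∀ y, (Ω₂ y).Nonempty)
    (h : Unambiguous (concatChannel Ω₁ Ω₂) C) : Unambiguous Ω₁ C := by
  intro x hx y hy hxy
  refine Set.eq_empty_of_forall_notMem fun z ⟨hzx, hzy⟩ => ?_
  obtain ⟨w, hw⟩ := hne₂ z
  have hw' : w ∈ concatChannel Ω₁ Ω₂ x ∩ concatChannel Ω₁ Ω₂ y :=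
    ⟨subset_concatChannel hzx hw, subset_concatChannel hzy hw⟩
  exact Set.eq_empty_iff_forall_notMem.mp (h x hx y hy hxy) w hw'

theorem Unambiguous.of_concatChannel_right {C : Finset X₁} {f : X₁ → X₂}
    (hf : ∀ x, f x ∈ Ω₁ x) (h : Unambiguous (concatChannel Ω₁ Ω₂) C) :
    Unambiguous (Ω₂ ∘ f) C :=
  h.mono fun x => subset_concatChannel (Ω₂ := Ω₂) (hf x)

end concatChannel

/-- The maximum cardinality of an unambiguous code for a concatenation
`Ω₁ ▶ Ω₂` is at most the minimum of the maximum cardinalities of unambiguous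
codes for `Ω₁` and for `Ω₂`; equivalently `C₁(Ω₁ ▶ Ω₂) ≤ min{C₁(Ω₁), C₁(Ω₂)}`. -/
theorem concat_channel_capacity {X₁ X₂ Y₂ : Type*} [Fintype X₁] [Fintype X₂]
    (Ω₁ : X₁ → Set X₂) (Ω₂ : X₂ → Set Y₂)
    (hne₁ : ∀ x, (Ω₁ x).Nonempty) (hne₂ : ∀ x, (Ω₂ x).Nonempty) :
    maxUnambCard (concatChannel Ω₁ Ω₂) ≤
      min (maxUnambCard Ω₁) (maxUnambCard Ω₂) := by
  choose f hf using hne₁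
  refine maxUnambCard_le fun C hC => le_min ?_ ?_
  · exact (hC.of_concatChannel_left hne₂).card_le_maxUnambCard
  · exact (hC.of_concatChannel_right hf).card_le_of_comp hne₂
end
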